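/- Let n ≥ 5 be odd, ϑ := n·cos(π/n)/(1 + cos(π/n)), a := 1/ϑ and b := (n − ϑ)/(2ϑ²). Then for every j ∈ {0,1,…,n−1}, the quantity λ_j := a + 2b·cos(2πj/n) satisfies λ_j ≥ 0, and λ_j = 0 if and only if j = (n−1)/2 or j = (n+1)/2. -/

import Mathlib

/-!
With `c = cos (π / n) > 0`, the eigenvalue factors as `λ_j = (1 + c) / (n c²) · (c + cos (2πj/n))`,
so everything reduces to comparing `cos (2πj/n)` with `-c = cos (π - π/n)`. On `[0, 2π]`, `cos t`
is at least `cos y` (for `y ∈ [0, π]`) exactly outside the open interval `(y, 2π - y)`; for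
`y = π - π/n` the grid points `2πj/n` avoid that interval because `n` is odd (it would need
`2j = n`), and they hit its endpoints exactly for `2j + 1 = n` and `2j = n + 1`.
-/

open Real

namespace Real

theorem cos_le_cos_of_le_or_two_pi_sub_le {y t : ℝ} (hy : y ≤ π) (ht : t ∈ Set.Icc 0 (2 * π))
    (h : t ≤ y ∨ 2 * π - y ≤ t) : cos y ≤ cos t := by
  rcases h with h | h
  · exact cos_le_cos_of_nonneg_of_le_pi ht.1 hy h
  · rw [← cos_two_pi_sub t]
    exact cos_le_cos_of_nonneg_of_le_pi (by linarith [ht.2]) hy (by linarith)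

theorem cos_eq_cos_iff_of_mem_Icc {y t : ℝ} (hy : y ∈ Set.Icc 0 π) (ht : t ∈ Set.Icc 0 (2 * π)) :
    cos t = cos y ↔ t = y ∨ t = 2 * π - y := by
  constructor
  · intro h
    rcases le_total t π with htπ | htπ
    · exact Or.inl (injOn_cos ⟨ht.1, htπ⟩ hy h)
    · have := injOn_cos ⟨by linarith [ht.2], by linarith⟩ hy ((cos_two_pi_sub t).trans h)
      exact Or.inr (by linarith)
  · rintro (rfl | rfl)
    · rfl
    · exact cos_two_pi_sub y

end Real

theorem lovasz_theta_eigenvalue_eq_mul {N c θ : ℝ} (hN : N ≠ 0) (hc : c ≠ 0) (hc₁ : 1 + c ≠ 0)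
    (hθ : θ = N * c / (1 + c)) (x : ℝ) :
    1 / θ + 2 * ((N - θ) / (2 * θ ^ 2)) * x = (1 + c) / (N * c ^ 2) * (c + x) := by
  subst hθ
  field_simp
  ring

section GridAngles

variable {n j : ℕ}

private theorem grid_angles_eq_pi_div_mul (hn : 0 < n) :
    2 * π * j / n = π / n * (2 * j) ∧ π - π / n = π / n * (n - 1) ∧
      2 * π - (π - π / n) = π / n * (n + 1) := by
  have : (n : ℝ) ≠ 0 := by positivity
  refine ⟨by ring, ?_, ?_⟩ <;> field_simp; ring

theorem two_pi_mul_div_mem_Icc (hj : j ≤ n) : 2 * π * j / n ∈ Set.Icc 0 (2 * π) :=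
  ⟨by positivity, div_le_of_le_mul₀ (by positivity) (by positivity) (by gcongr)⟩

theorem pi_sub_pi_div_mem_Icc (hn : 0 < n) : π - π / n ∈ Set.Icc 0 π :=
  ⟨sub_nonneg.2 (div_le_self pi_pos.le (by exact_mod_cast hn)), sub_le_self _ (by positivity)⟩

theorem cos_pi_div_pos (hn : 2 < n) : 0 < cos (π / n) := by
  have hn₀ : (0 : ℝ) < n := by positivity
  refine cos_pos_of_mem_Ioo ⟨by linarith [pi_pos, (by positivity : 0 < π / n)], ?_⟩
  exact div_lt_div_of_pos_left pi_pos two_pos (by exact_mod_cast hn)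

theorem cos_pi_div_add_cos_eq_cos_sub_cos (n : ℕ) (x : ℝ) :
    cos (π / n) + cos x = cos x - cos (π - π / n) := by
  rw [cos_pi_sub]; ring

theorem cos_pi_div_add_cos_two_pi_mul_div_nonneg (hodd : Odd n) (hj : j < n) :
    0 ≤ cos (π / n) + cos (2 * π * j / n) := by
  have hu : 0 < π / n := by have := hodd.pos; positivity
  obtain ⟨ht, hy, hy'⟩ := grid_angles_eq_pi_div_mul (j := j) hodd.pos
  rw [cos_pi_div_add_cos_eq_cos_sub_cos, sub_nonneg]
  refine cos_le_cos_of_le_or_two_pi_sub_le (pi_sub_pi_div_mem_Icc hodd.pos).2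
    (two_pi_mul_div_mem_Icc hj.le) ?_
  rw [hy', ht, hy, mul_le_mul_iff_of_pos_left hu, mul_le_mul_iff_of_pos_left hu,
    le_sub_iff_add_le]
  have : 2 * j + 1 ≤ n ∨ n + 1 ≤ 2 * j := by obtain ⟨m, rfl⟩ := hodd; omega
  exact_mod_cast this

theorem cos_pi_div_add_cos_two_pi_mul_div_eq_zero_iff (hj : j < n) :
    cos (π / n) + cos (2 * π * j / n) = 0 ↔ 2 * j + 1 = n ∨ 2 * j = n + 1 := by
  have hn : 0 < n := by omega
  have hu : 0 < π / n := by positivity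
  obtain ⟨ht, hy, hy'⟩ := grid_angles_eq_pi_div_mul (j := j) hn
  rw [cos_pi_div_add_cos_eq_cos_sub_cos, sub_eq_zero,
    cos_eq_cos_iff_of_mem_Icc (pi_sub_pi_div_mem_Icc hn) (two_pi_mul_div_mem_Icc hj.le), hy', ht,
    hy, mul_right_inj' hu.ne', mul_right_inj' hu.ne', eq_sub_iff_add_eq]
  norm_cast

end GridAngles

/-- Let `n ≥ 5` be odd, `ϑ = n·cos(π/n)/(1 + cos(π/n))`, `a = 1/ϑ`, `b = (n - ϑ)/(2ϑ²)`.
Then for every `j ∈ {0, 1, …, n-1}` the eigenvalue `λ_j = a + 2b·cos(2πj/n)` of the circulant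
block of the optimal Lovász theta solution is nonnegative, and it vanishes exactly when
`j = (n-1)/2` or `j = (n+1)/2`. -/
theorem circulant_eigenvalue_nonneg_and_zero_iff (n : ℕ) (hodd : Odd n) (hn : 5 ≤ n)
    (θ a b : ℝ)
    (hθ : θ = n * Real.cos (Real.pi / n) / (1 + Real.cos (Real.pi / n)))
    (ha : a = 1 / θ)
    (hb : b = (n - θ) / (2 * θ ^ 2))
    (j : ℕ) (hj : j < n) :
    0 ≤ a + 2 * b * Real.cos (2 * Real.pi * j / n) ∧
      (a + 2 * b * Real.cos (2 * Real.pi * j / n) = 0 ↔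
        j = (n - 1) / 2 ∨ j = (n + 1) / 2) := by
  have hn₀ : (0 : ℝ) < n := by positivity
  have hc : 0 < cos (π / n) := cos_pi_div_pos (by omega)
  have hκ : 0 < (1 + cos (π / n)) / (n * cos (π / n) ^ 2) := by positivity
  rw [ha, hb, lovasz_theta_eigenvalue_eq_mul hn₀.ne' hc.ne' (by positivity) hθ]
  refine ⟨mul_nonneg hκ.le (cos_pi_div_add_cos_two_pi_mul_div_nonneg hodd hj), ?_⟩
  rw [mul_eq_zero, or_iff_right hκ.ne', cos_pi_div_add_cos_two_pi_mul_div_eq_zero_iff hj]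
  obtain ⟨m, rfl⟩ := hodd
  omega
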